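/- arXiv:math/0406319 — 2 statements merged into one kernel-verified Lean document; each statement's English description precedes it below -/
import Mathlib

section
/- Let A, B, C be vector spaces over the complex numbers, with A and B finite-dimensional and nonzero. Let f : A → B → C be a bilinear map with no zero divisors, i.e., for all a ∈ A and b ∈ B, if f(a)(b) = 0 then a = 0 or b = 0. Then the dimension of the linear span of the set {f(a)(b) : a ∈ A, b ∈ B} in C is at least dim A + dim B − 1. -/
open MvPolynomial Finsupp

noncomputable section HopfAux

variable {p q : ℕ}

def wB (p q : ℕ) : Fin p ⊕ Fin q → ℕ × ℕ := Sum.elim (fun _ => (1,0)) (fun _ => (0,1))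

lemma weight_wB (α : Fin p ⊕ Fin q →₀ ℕ) :
    Finsupp.weight (wB p q) α = (∑ i, α (.inl i), ∑ j, α (.inr j)) := by
  rw [Finsupp.weight_apply, Finsupp.sum_fintype _ _ (by intro i; simp)]
  rw [Fintype.sum_sum_type]
  ext <;> simp [wB, Prod.smul_def, Prod.fst_sum, Prod.snd_sum]

lemma wcomp_mul {σ M' : Type*} [AddCancelCommMonoid M'] [DecidableEq M'] (w : σ → M')
    (g φ : MvPolynomial σ ℂ) {nn : M'} (hφ : φ.IsWeightedHomogeneous w nn) (m : M') :
    weightedHomogeneousComponent w (m + nn) (g * φ) =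
      weightedHomogeneousComponent w m g * φ := by
  conv_lhs => rw [g.as_sum]
  rw [Finset.sum_mul, map_sum]
  conv_rhs => rw [g.as_sum, map_sum, Finset.sum_mul]
  refine Finset.sum_congr rfl (fun d _ => ?_)
  have hd : (monomial d (coeff d g)).IsWeightedHomogeneous w (Finsupp.weight w d) :=
    isWeightedHomogeneous_monomial w d _ rfl
  by_cases h : Finsupp.weight w d = m
  · rw [h] at hd
    rw [(hd.mul hφ).weightedHomogeneousComponent_same, hd.weightedHomogeneousComponent_same]
  · rw [(hd.mul hφ).weightedHomogeneousComponent_ne _ (by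
      intro hc; exact h (add_right_cancel hc.symm)),
      hd.weightedHomogeneousComponent_ne _ (Ne.symm h), zero_mul]

variable {n : ℕ} (φ : Fin n → MvPolynomial (Fin p ⊕ Fin q) ℂ)

/-- spanning set for bidegree `(c,c)` -/
def TT (MM c : ℕ) : Set (MvPolynomial (Fin p ⊕ Fin q) ℂ) :=
  {h | ∃ (α : Fin p ⊕ Fin q →₀ ℕ) (γ : Fin n → ℕ) (c' : ℕ),
    c' < MM ∧ Finsupp.weight (wB p q) α = (c', c') ∧ c' + ∑ k, γ k = c ∧
    h = monomial α 1 * ∏ k, φ k ^ γ k}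

lemma span_step {MM c : ℕ} (k : Fin n) {x : MvPolynomial (Fin p ⊕ Fin q) ℂ}
    (hx : x ∈ Submodule.span ℂ (TT φ MM c)) :
    x * φ k ∈ Submodule.span ℂ (TT φ MM (c+1)) := by
  have : x * φ k = (LinearMap.mulRight ℂ (φ k)) x := rfl
  rw [this]
  have h1 : (LinearMap.mulRight ℂ (φ k)) x ∈
      Submodule.map (LinearMap.mulRight ℂ (φ k)) (Submodule.span ℂ (TT φ MM c)) :=
    Submodule.mem_map_of_mem hx
  rw [Submodule.map_span] at h1
  refine Submodule.span_mono ?_ h1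
  rintro _ ⟨t, ⟨α, γ, c', hc', hw, hsum, rfl⟩, rfl⟩
  refine ⟨α, Function.update γ k (γ k + 1), c', hc', hw, ?_, ?_⟩
  · rw [Finset.sum_update_of_mem (Finset.mem_univ k), ← Finset.erase_eq]
    rw [← Finset.add_sum_erase _ γ (Finset.mem_univ k)] at hsum
    omega
  · simp only [LinearMap.mulRight_apply]
    rw [← Finset.mul_prod_erase _ (fun k_1 => φ k_1 ^ Function.update γ k (γ k+1) k_1)
        (Finset.mem_univ k),
      ← Finset.mul_prod_erase _ (fun k_1 => φ k_1 ^ γ k_1) (Finset.mem_univ k)]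
    have he : ∏ x ∈ Finset.univ.erase k, φ x ^ Function.update γ k (γ k + 1) x
        = ∏ x ∈ Finset.univ.erase k, φ x ^ γ x :=
      Finset.prod_congr rfl (fun x hx => by
        rw [Function.update_of_ne (Finset.ne_of_mem_erase hx)])
    rw [Function.update_self, he, pow_succ]
    ring

lemma exists_ge_of_sum {m N : ℕ} (hm : 0 < m) (v : Fin m → ℕ) (hc : m * N ≤ ∑ i, v i) :
    ∃ i, N ≤ v i := by
  by_contra h
  push_neg at h
  have : ∑ i, v i < ∑ _i : Fin m, N :=
    Finset.sum_lt_sum_of_nonempty (Finset.univ_nonempty_iff.2 (Fin.pos_iff_nonempty.mp hm)) (fun i _ => h i)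
  simp only [Finset.sum_const, Finset.card_univ, Fintype.card_fin, smul_eq_mul] at this
  omega

lemma spanning {N : ℕ} (hp : 0 < p) (hq : 0 < q) (hN : 0 < N)
    (hhom : ∀ k, (φ k).IsWeightedHomogeneous (wB p q) (1,1))
    (hNmem : ∀ (i : Fin p) (j : Fin q),
      (X (.inl i) * X (.inr j) : MvPolynomial (Fin p ⊕ Fin q) ℂ)^N ∈ Ideal.span (Set.range φ)) :
    ∀ (c : ℕ) (h : MvPolynomial (Fin p ⊕ Fin q) ℂ),
      h.IsWeightedHomogeneous (wB p q) (c, c) →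
      h ∈ Submodule.span ℂ (TT φ (max (p*N) (q*N)) c) := by
  set MM := max (p*N) (q*N) with hMM
  intro c
  induction c using Nat.strong_induction_on with
  | _ c IH =>
  intro h hh
  rw [h.as_sum]
  refine Submodule.sum_mem _ (fun α hα => ?_)
  have hw : Finsupp.weight (wB p q) α = (c, c) := hh (MvPolynomial.mem_support_iff.mp hα)
  rw [weight_wB] at hw
  have hw1 : ∑ i, α (.inl i) = c := congrArg Prod.fst hw
  have hw2 : ∑ j, α (.inr j) = c := congrArg Prod.snd hw
  by_cases hcM : c < MM
  · -- base case
    have hmem : (monomial α (1:ℂ) * ∏ k, φ k ^ (0:ℕ)) ∈ TT φ MM c := by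
      exact ⟨α, 0, c, hcM, by rw [weight_wB, hw1, hw2], by simp, by simp⟩
    have : monomial α (coeff α h) = (coeff α h) • (monomial α (1:ℂ) * ∏ k, φ k ^ (0:ℕ)) := by
      simp [smul_monomial]
    rw [this]
    exact Submodule.smul_mem _ _ (Submodule.subset_span hmem)
  · -- inductive case
    push_neg at hcM
    have hc1 : 1 ≤ c := le_trans (Nat.mul_pos hp hN) (le_trans (le_max_left _ _) hcM)
    obtain ⟨i, hi⟩ := exists_ge_of_sum hp (fun i => α (.inl i))
      (by rw [hw1]; exact le_trans (le_max_left _ _) hcM)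
    obtain ⟨j, hj⟩ := exists_ge_of_sum hq (fun j => α (.inr j))
      (by rw [hw2]; exact le_trans (le_max_right _ _) hcM)
    set β := α - (single (Sum.inl i) N + single (Sum.inr j) N) with hβ
    have hβα : β + (single (Sum.inl i) N + single (Sum.inr j) N) = α := by
      ext s
      rw [Finsupp.add_apply, hβ, Finsupp.tsub_apply]
      refine Nat.sub_add_cancel ?_
      rcases s with s | s <;>
        simp only [Finsupp.add_apply, Finsupp.single_apply, reduceCtorEq, if_false,
          Sum.inl.injEq, Sum.inr.injEq, add_zero, zero_add] <;>
        split_ifs with hs <;> first | (exact hs ▸ ‹_›) | exact Nat.zero_le _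
    have key : monomial α (coeff α h) =
        monomial β (coeff α h) * (X (.inl i) * X (.inr j))^N := by
      rw [mul_pow, X_pow_eq_monomial, X_pow_eq_monomial, monomial_mul, monomial_mul,
        mul_one, mul_one, ← add_assoc]
      rw [add_assoc, hβα]
    obtain ⟨g, hg⟩ := Ideal.mem_span_range_iff_exists_fun.mp (hNmem i j)
    have rep : monomial α (coeff α h) = ∑ k, (monomial β (coeff α h) * g k) * φ k := by
      rw [key, ← hg, Finset.mul_sum]
      exact Finset.sum_congr rfl (fun k _ => by ring)
    have hc1eq : ((c-1 : ℕ), (c-1 : ℕ)) + ((1:ℕ),(1:ℕ)) = ((c:ℕ), (c:ℕ)) := by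
      rw [Prod.mk_add_mk]
      exact congrArg₂ Prod.mk (by omega) (by omega)
    have hcomp := congrArg (weightedHomogeneousComponent (wB p q) ((c:ℕ),(c:ℕ))) rep
    rw [(isWeightedHomogeneous_monomial (wB p q) α (coeff α h)
        (by rw [weight_wB, hw1, hw2])).weightedHomogeneousComponent_same, map_sum] at hcomp
    rw [hcomp]
    refine Submodule.sum_mem _ (fun k _ => ?_)
    rw [← hc1eq, wcomp_mul _ _ _ (hhom k)]
    have hGmem := (weightedHomogeneousComponent_isWeightedHomogeneous
      ((c-1 : ℕ), (c-1 : ℕ)) (monomial β (coeff α h) * g k) (w := wB p q))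
    have hstep := span_step φ k (IH (c-1) (by omega) _ hGmem)
    rwa [Nat.sub_add_cancel hc1] at hstep

theorem keyFalse (p' q' m N : ℕ) (hN : 0 < N)
    (φ : Fin (m+1) → MvPolynomial (Fin (p'+1) ⊕ Fin (q'+1)) ℂ)
    (hhom : ∀ k, (φ k).IsWeightedHomogeneous (wB (p'+1) (q'+1)) (1,1))
    (hNmem : ∀ (i : Fin (p'+1)) (j : Fin (q'+1)),
      (X (.inl i) * X (.inr j) : MvPolynomial (Fin (p'+1) ⊕ Fin (q'+1)) ℂ)^N
        ∈ Ideal.span (Set.range φ))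
    (hm : m + 1 ≤ p' + q') : False := by
  set MM := max ((p'+1)*N) ((q'+1)*N) with hMMdef
  have hMM1 : 1 ≤ MM := le_trans (Nat.mul_pos (Nat.succ_pos _) hN) (le_max_left _ _)
  set Kc := MM^(p'+q'+3) with hKc
  set e := Kc * (2*(p'+q'+2))^m + 1 with he
  set d := (p'+q'+2)*e with hd
  have he1 : 1 ≤ e := Nat.le_add_left 1 _
  have hd1 : 1 ≤ d := by
    have : 1*1 ≤ (p'+q'+2)*e := Nat.mul_le_mul (by omega) he1
    simpa using this
  -- the finite spanning set
  set ι := (Fin MM × (Fin (p'+1) ⊕ Fin (q'+1) → Fin MM) × (Fin m → Fin (d+1))) with hι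
  set FF : ι → MvPolynomial (Fin (p'+1) ⊕ Fin (q'+1)) ℂ := fun t =>
    monomial (equivFunOnFinite.symm (fun s => ((t.2.1 s : ℕ)))) 1 *
      ((∏ k : Fin m, φ k.castSucc ^ ((t.2.2 k : ℕ))) *
        φ (Fin.last m) ^ (d - (t.1 : ℕ) - ∑ k, (t.2.2 k : ℕ))) with hFF
  set Sfin : Finset (MvPolynomial (Fin (p'+1) ⊕ Fin (q'+1)) ℂ) :=
    Finset.image FF Finset.univ with hSfin
  -- coverage
  have hcover : TT φ MM d ⊆ ↑Sfin := by
    rintro _ ⟨α, γ, c', hc', hw, hsum, rfl⟩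
    rw [weight_wB] at hw
    have hw1 : ∑ i, α (.inl i) = c' := congrArg Prod.fst hw
    have hw2 : ∑ j, α (.inr j) = c' := congrArg Prod.snd hw
    have hαb : ∀ s, α s < MM := by
      rintro (s | s)
      · exact lt_of_le_of_lt (hw1 ▸ Finset.single_le_sum
          (f := fun i => α (Sum.inl i)) (fun i _ => Nat.zero_le _) (Finset.mem_univ s)) hc'
      · exact lt_of_le_of_lt (hw2 ▸ Finset.single_le_sum
          (f := fun j => α (Sum.inr j)) (fun j _ => Nat.zero_le _) (Finset.mem_univ s)) hc'
    have hγb : ∀ k, γ k < d + 1 := by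
      intro k
      have : γ k ≤ ∑ k', γ k' := Finset.single_le_sum (fun k' _ => Nat.zero_le _)
        (Finset.mem_univ k)
      omega
    refine Finset.mem_coe.mpr (Finset.mem_image.mpr
      ⟨(⟨c', hc'⟩, fun s => ⟨α s, hαb s⟩, fun k => ⟨γ k.castSucc, hγb _⟩), Finset.mem_univ _, ?_⟩)
    rw [hFF]
    simp only
    have hα : (equivFunOnFinite.symm (fun s => ((α s : ℕ))) : Fin (p'+1) ⊕ Fin (q'+1) →₀ ℕ)
        = α := Finsupp.equivFunOnFinite_symm_coe α
    rw [hα]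
    congr 1
    rw [Fin.prod_univ_castSucc (f := fun k => φ k ^ γ k)]
    congr 1
    have hss : ∑ k : Fin (m+1), γ k =
        (∑ k : Fin m, γ k.castSucc) + γ (Fin.last m) := Fin.sum_univ_castSucc _
    congr 1
    omega
  have hspan_le : Submodule.span ℂ (TT φ MM d) ≤ Submodule.span ℂ (↑Sfin) :=
    Submodule.span_mono hcover
  -- the linearly independent family of monomials of bidegree (d,d)
  set κ := ((Fin p' → Fin e) × (Fin q' → Fin e)) with hκ
  have hsumub : ∀ {r : ℕ} (u : Fin r → Fin e), r ≤ p'+q'+2 → ∑ i, (u i : ℕ) ≤ d := by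
    intro r u hr
    have h1 : ∑ i, (u i : ℕ) ≤ ∑ _i : Fin r, (e-1) :=
      Finset.sum_le_sum (fun i _ => by have := (u i).isLt; omega)
    simp only [Finset.sum_const, Finset.card_univ, Fintype.card_fin, smul_eq_mul] at h1
    have h2 : r * (e-1) ≤ (p'+q'+2) * e := Nat.mul_le_mul hr (by omega)
    omega
  set Ex : κ → (Fin (p'+1) ⊕ Fin (q'+1) →₀ ℕ) := fun s => equivFunOnFinite.symm
    (Sum.elim (Fin.snoc (α := fun _ => ℕ) (fun i => (s.1 i : ℕ)) (d - ∑ i, (s.1 i : ℕ)))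
      (Fin.snoc (α := fun _ => ℕ) (fun j => (s.2 j : ℕ)) (d - ∑ j, (s.2 j : ℕ)))) with hEx
  have hExapp1 : ∀ (s : κ) (i : Fin (p'+1)), (Ex s) (Sum.inl i) =
      Fin.snoc (α := fun _ => ℕ) (fun i => (s.1 i : ℕ)) (d - ∑ i, (s.1 i : ℕ)) i := by
    intro s i; simp only [hEx]; rfl
  have hExapp2 : ∀ (s : κ) (j : Fin (q'+1)), (Ex s) (Sum.inr j) =
      Fin.snoc (α := fun _ => ℕ) (fun j => (s.2 j : ℕ)) (d - ∑ j, (s.2 j : ℕ)) j := by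
    intro s j; simp only [hEx]; rfl
  have hExinj : Function.Injective Ex := by
    intro s s' hss
    have h1 : ∀ i : Fin p', (s.1 i : ℕ) = (s'.1 i : ℕ) := by
      intro i
      have h0 := congrArg (fun f => f (Sum.inl (Fin.castSucc i))) (congrArg DFunLike.coe hss)
      simp only [hExapp1] at h0
      simpa [Fin.snoc_castSucc] using h0
    have h2 : ∀ j : Fin q', (s.2 j : ℕ) = (s'.2 j : ℕ) := by
      intro j
      have h0 := congrArg (fun f => f (Sum.inr (Fin.castSucc j))) (congrArg DFunLike.coe hss)
      simp only [hExapp2] at h0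
      simpa [Fin.snoc_castSucc] using h0
    exact Prod.ext (funext fun i => Fin.val_injective (h1 i))
      (funext fun j => Fin.val_injective (h2 j))
  have hExw : ∀ s : κ, Finsupp.weight (wB (p'+1) (q'+1)) (Ex s) = ((d : ℕ), (d : ℕ)) := by
    intro s
    rw [weight_wB]
    have e1 : ∑ i : Fin (p'+1), (Ex s) (Sum.inl i) = d := by
      simp only [hExapp1]
      rw [Fin.sum_univ_castSucc]
      simp only [Fin.snoc_castSucc, Fin.snoc_last]
      have := hsumub s.1 (by omega)
      omega
    have e2 : ∑ j : Fin (q'+1), (Ex s) (Sum.inr j) = d := by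
      simp only [hExapp2]
      rw [Fin.sum_univ_castSucc]
      simp only [Fin.snoc_castSucc, Fin.snoc_last]
      have := hsumub s.2 (by omega)
      omega
    rw [e1, e2]
  -- membership of the monomials in the span
  set V := Submodule.span ℂ ((Sfin : Set (MvPolynomial (Fin (p'+1) ⊕ Fin (q'+1)) ℂ))) with hV
  haveI : FiniteDimensional ℂ V := FiniteDimensional.span_of_finite ℂ Sfin.finite_toSet
  have hmem : ∀ s : κ, monomial (Ex s) (1:ℂ) ∈ V := by
    intro s
    refine hspan_le (spanning φ (Nat.succ_pos _) (Nat.succ_pos _) hN hhom hNmem d _ ?_)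
    exact isWeightedHomogeneous_monomial _ _ _ (hExw s)
  set vi : κ → V := fun s => ⟨monomial (Ex s) (1:ℂ), hmem s⟩ with hvi
  have hli : LinearIndependent ℂ vi := by
    apply LinearIndependent.of_comp V.subtype
    have h0 : (V.subtype ∘ vi) = (fun s => monomial (Ex s) (1:ℂ)) := rfl
    rw [h0]
    have hb : (fun s : κ => monomial (Ex s) (1:ℂ)) =
        (fun z => ((basisMonomials (Fin (p'+1) ⊕ Fin (q'+1)) ℂ) z)) ∘ Ex := by
      funext s
      simp [coe_basisMonomials]
    rw [hb]
    exact (basisMonomials (Fin (p'+1) ⊕ Fin (q'+1)) ℂ).linearIndependent.comp Ex hExinj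
  have count1 : Fintype.card κ ≤ Module.finrank ℂ V := hli.fintype_card_le_finrank
  have count2 : Module.finrank ℂ V ≤ Sfin.card := finrank_span_finset_le_card Sfin
  have count3 : Sfin.card ≤ Fintype.card ι := le_trans (Finset.card_image_le)
    (by rw [Finset.card_univ])
  have cardκ : Fintype.card κ = e^(p'+q') := by
    simp only [hκ, Fintype.card_prod, Fintype.card_fun, Fintype.card_fin]
    rw [pow_add]
  have cardι : Fintype.card ι = MM * MM^(p'+q'+2) * (d+1)^m := by
    simp only [hι, Fintype.card_prod, Fintype.card_fun, Fintype.card_fin, Fintype.card_sum]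
    have : p' + 1 + (q' + 1) = p' + q' + 2 := by omega
    rw [this, mul_assoc]
  -- final arithmetic
  have hchain : e^(p'+q') ≤ MM * MM^(p'+q'+2) * (d+1)^m := by
    rw [← cardκ, ← cardι]
    exact le_trans count1 (le_trans count2 count3)
  have harith : MM * MM^(p'+q'+2) * (d+1)^m < e^(p'+q') := by
    have s1 : MM * MM^(p'+q'+2) = Kc := by rw [hKc, pow_succ]; ring
    have s2 : d + 1 ≤ 2*(p'+q'+2)*e := by
      have h2d : 2*(p'+q'+2)*e = d + d := by rw [hd]; ring
      omega
    have s3 : (d+1)^m ≤ (2*(p'+q'+2)*e)^m := Nat.pow_le_pow_left s2 m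
    have s5 : MM * MM^(p'+q'+2) * (d+1)^m ≤ (Kc * (2*(p'+q'+2))^m) * e^m := by
      rw [s1]
      calc Kc * (d+1)^m ≤ Kc * ((2*(p'+q'+2))^m * e^m) := by
            rw [← mul_pow]; exact Nat.mul_le_mul_left _ s3
        _ = Kc * (2*(p'+q'+2))^m * e^m := by ring
    have s6 : (Kc * (2*(p'+q'+2))^m) * e^m < e * e^m :=
      Nat.mul_lt_mul_of_lt_of_le (by rw [he]; exact Nat.lt_succ_self _) (le_refl _)
        (Nat.pow_pos (n := m) he1)
    have s7 : e * e^m = e^(m+1) := (pow_succ e m).symm ▸ by ring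
    have s8 : e^(m+1) ≤ e^(p'+q') := Nat.pow_le_pow_right he1 hm
    calc MM * MM^(p'+q'+2) * (d+1)^m ≤ (Kc * (2*(p'+q'+2))^m) * e^m := s5
      _ < e * e^m := s6
      _ = e^(m+1) := s7
      _ ≤ e^(p'+q') := s8
  omega

lemma bilin_sum {A B C : Type*} [AddCommGroup A] [Module ℂ A] [AddCommGroup B] [Module ℂ B]
    [AddCommGroup C] [Module ℂ C] (f : A →ₗ[ℂ] B →ₗ[ℂ] C) (P Q : ℕ)
    (r : Fin P → ℂ) (s : Fin Q → ℂ) (vA : Fin P → A) (vB : Fin Q → B) :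
    f (∑ i, r i • vA i) (∑ j, s j • vB j) = ∑ i, ∑ j, (r i * s j) • f (vA i) (vB j) := by
  simp only [map_sum, LinearMap.sum_apply, map_smul, LinearMap.smul_apply, Finset.smul_sum,
    smul_smul]
  rw [Finset.sum_comm]
  exact Finset.sum_congr rfl fun i _ => Finset.sum_congr rfl fun j _ => by rw [mul_comm]

end HopfAux

/-- **Hopf's theorem on bilinear maps over ℂ.**
If `A`, `B` are nonzero finite-dimensional complex vector spaces, `C` any complex
vector space, and `f : A → B → C` is bilinear with no zero divisors (i.e.
`f a b = 0` implies `a = 0` or `b = 0`), then the span of the image of `f`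
has dimension at least `dim A + dim B - 1`. -/
theorem hopf_bilinear_span_finrank_ge
    {A B C : Type*} [AddCommGroup A] [Module ℂ A] [AddCommGroup B] [Module ℂ B]
    [AddCommGroup C] [Module ℂ C]
    [FiniteDimensional ℂ A] [FiniteDimensional ℂ B]
    [Nontrivial A] [Nontrivial B]
    (f : A →ₗ[ℂ] B →ₗ[ℂ] C)
    (hf : ∀ (a : A) (b : B), f a b = 0 → a = 0 ∨ b = 0) :
    Module.finrank ℂ A + Module.finrank ℂ B - 1 ≤
      Module.finrank ℂ (Submodule.span ℂ {c : C | ∃ (a : A) (b : B), f a b = c}) := by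
  classical
  obtain ⟨p', hP⟩ : ∃ p', Module.finrank ℂ A = p' + 1 :=
    ⟨Module.finrank ℂ A - 1, by have := Module.finrank_pos (R := ℂ) (M := A); omega⟩
  obtain ⟨q', hQ⟩ : ∃ q', Module.finrank ℂ B = q' + 1 :=
    ⟨Module.finrank ℂ B - 1, by have := Module.finrank_pos (R := ℂ) (M := B); omega⟩
  set bA : Module.Basis (Fin (p'+1)) ℂ A := (Module.finBasis ℂ A).reindex (finCongr hP) with hbA
  set bB : Module.Basis (Fin (q'+1)) ℂ B := (Module.finBasis ℂ B).reindex (finCongr hQ) with hbB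
  set W := Submodule.span ℂ {c : C | ∃ (a : A) (b : B), f a b = c} with hW
  set cmat : Fin (p'+1) → Fin (q'+1) → C := fun i j => f (bA i) (bB j) with hcmat
  have hWeq : W = Submodule.span ℂ
      (Set.range (fun ij : Fin (p'+1) × Fin (q'+1) => cmat ij.1 ij.2)) := by
    apply le_antisymm
    · rw [hW, Submodule.span_le]
      rintro _ ⟨a, b, rfl⟩
      have hab : f a b = ∑ i, ∑ j, (bA.repr a i * bB.repr b j) • cmat i j := by
        conv_lhs => rw [← bA.sum_repr a, ← bB.sum_repr b]
        rw [bilin_sum]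
      rw [hab]
      exact Submodule.sum_mem _ (fun i _ => Submodule.sum_mem _ (fun j _ =>
        Submodule.smul_mem _ _ (Submodule.subset_span ⟨(i,j), rfl⟩)))
    · rw [Submodule.span_le]
      rintro _ ⟨ij, rfl⟩
      exact Submodule.subset_span ⟨bA ij.1, bB ij.2, rfl⟩
  haveI hWfd : FiniteDimensional ℂ W := by
    rw [hWeq]
    exact FiniteDimensional.span_of_finite ℂ (Set.finite_range _)
  have hmemW : ∀ i j, cmat i j ∈ W :=
    fun i j => Submodule.subset_span ⟨bA i, bB j, rfl⟩
  -- W is nontrivial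
  have hc00 : cmat 0 0 ≠ 0 := by
    intro h0
    rcases hf _ _ h0 with h | h
    · exact bA.ne_zero 0 h
    · exact bB.ne_zero 0 h
  haveI : Nontrivial W := by
    refine ⟨⟨cmat 0 0, hmemW 0 0⟩, 0, ?_⟩
    simp only [ne_eq, Submodule.mk_eq_zero]
    exact hc00
  by_contra hcon
  push_neg at hcon
  obtain ⟨m, hn⟩ : ∃ m, Module.finrank ℂ W = m + 1 :=
    ⟨Module.finrank ℂ W - 1, by have := Module.finrank_pos (R := ℂ) (M := W); omega⟩
  rw [hP, hQ, hn] at hcon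
  have hm : m + 1 ≤ p' + q' := by omega
  set u : Module.Basis (Fin (m+1)) ℂ W := (Module.finBasis ℂ W).reindex (finCongr hn) with hu
  set t : Fin (p'+1) → Fin (q'+1) → Fin (m+1) → ℂ :=
    fun i j k => u.repr ⟨cmat i j, hmemW i j⟩ k with ht
  set φ : Fin (m+1) → MvPolynomial (Fin (p'+1) ⊕ Fin (q'+1)) ℂ := fun k =>
    ∑ i, ∑ j, MvPolynomial.C (t i j k) *
      (MvPolynomial.X (.inl i) * MvPolynomial.X (.inr j)) with hφ
  have hhom : ∀ k, (φ k).IsWeightedHomogeneous (wB (p'+1) (q'+1)) (1,1) := by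
    intro k
    refine MvPolynomial.IsWeightedHomogeneous.sum _ _ _ (fun i _ => ?_)
    refine MvPolynomial.IsWeightedHomogeneous.sum _ _ _ (fun j _ => ?_)
    have h1 := (MvPolynomial.isWeightedHomogeneous_C (wB (p'+1) (q'+1)) (t i j k)).mul
      ((MvPolynomial.isWeightedHomogeneous_X ℂ (wB (p'+1) (q'+1)) (Sum.inl i)).mul
        (MvPolynomial.isWeightedHomogeneous_X ℂ (wB (p'+1) (q'+1)) (Sum.inr j)))
    exact h1
  have heval : ∀ (z : Fin (p'+1) ⊕ Fin (q'+1) → ℂ) k,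
      MvPolynomial.eval z (φ k) = ∑ i, ∑ j, t i j k * (z (.inl i) * z (.inr j)) := by
    intro z k
    rw [hφ]
    simp [map_sum]
  have hzero : ∀ (z : Fin (p'+1) ⊕ Fin (q'+1) → ℂ),
      (∀ k, MvPolynomial.eval z (φ k) = 0) →
      (∀ i, z (.inl i) = 0) ∨ (∀ j, z (.inr j) = 0) := by
    intro z hz
    set a : A := ∑ i, z (.inl i) • bA i with ha
    set b : B := ∑ j, z (.inr j) • bB j with hb
    set wsum : W := ∑ i, ∑ j, (z (.inl i) * z (.inr j)) • (⟨cmat i j, hmemW i j⟩ : W)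
      with hwsum
    have hw1 : (wsum : C) = f a b := by
      rw [ha, hb, bilin_sum, hwsum]
      push_cast
      rfl
    have hw2 : wsum = 0 := by
      have hr : ∀ k, u.repr wsum k = 0 := by
        intro k
        rw [hwsum, map_sum]
        have : ∀ i, u.repr (∑ j, (z (.inl i) * z (.inr j)) • (⟨cmat i j, hmemW i j⟩ : W))
            = ∑ j, (z (.inl i) * z (.inr j)) • u.repr ⟨cmat i j, hmemW i j⟩ := by
          intro i; rw [map_sum]; exact Finset.sum_congr rfl (fun j _ => map_smul _ _ _)
        rw [Finset.sum_congr rfl (fun i _ => this i)]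
        have := heval z k
        rw [hz k] at this
        rw [Finsupp.finset_sum_apply]
        calc ∑ i, (∑ j, (z (.inl i) * z (.inr j)) • u.repr ⟨cmat i j, hmemW i j⟩) k
            = ∑ i, ∑ j, (z (.inl i) * z (.inr j)) * t i j k := by
              refine Finset.sum_congr rfl (fun i _ => ?_)
              rw [Finsupp.finset_sum_apply]
              exact Finset.sum_congr rfl (fun j _ => by rw [Finsupp.smul_apply, ht, smul_eq_mul])
          _ = ∑ i, ∑ j, t i j k * (z (.inl i) * z (.inr j)) :=
              Finset.sum_congr rfl (fun i _ => Finset.sum_congr rfl (fun j _ => by ring))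
          _ = 0 := this.symm
      have : u.repr wsum = 0 := Finsupp.ext (fun k => hr k)
      exact (LinearEquiv.map_eq_zero_iff u.repr).mp this
    have hfab : f a b = 0 := by rw [← hw1, hw2]; rfl
    rcases hf a b hfab with h | h
    · left
      intro i
      have hli := bA.linearIndependent
      rw [Fintype.linearIndependent_iff] at hli
      exact hli (fun i => z (.inl i)) (by rw [← ha, h]) i
    · right
      intro j
      have hli := bB.linearIndependent
      rw [Fintype.linearIndependent_iff] at hli
      exact hli (fun j => z (.inr j)) (by rw [← hb, h]) j
  -- Nullstellensatz
  set I := Ideal.span (Set.range φ) with hI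
  have hrad : ∀ (i : Fin (p'+1)) (j : Fin (q'+1)), ∃ NN,
      ((MvPolynomial.X (.inl i) * MvPolynomial.X (.inr j) :
        MvPolynomial (Fin (p'+1) ⊕ Fin (q'+1)) ℂ))^NN ∈ I := by
    intro i j
    have hv : (MvPolynomial.X (.inl i) * MvPolynomial.X (.inr j) :
        MvPolynomial (Fin (p'+1) ⊕ Fin (q'+1)) ℂ) ∈
        MvPolynomial.vanishingIdeal ℂ (MvPolynomial.zeroLocus ℂ I) := by
      rw [MvPolynomial.mem_vanishingIdeal_iff]
      intro z hz
      rw [MvPolynomial.mem_zeroLocus_iff] at hz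
      have hzk : ∀ k, MvPolynomial.eval z (φ k) = 0 :=
        fun k => hz (φ k) (Ideal.subset_span ⟨k, rfl⟩)
      rw [map_mul, MvPolynomial.aeval_X, MvPolynomial.aeval_X]
      rcases hzero z hzk with h | h
      · rw [h i, zero_mul]
      · rw [h j, mul_zero]
    rw [MvPolynomial.vanishingIdeal_zeroLocus_eq_radical, Ideal.mem_radical_iff] at hv
    exact hv
  choose Nf hNf using hrad
  set N := 1 + Finset.univ.sup (fun ij : Fin (p'+1) × Fin (q'+1) => Nf ij.1 ij.2) with hNdef
  have hN : 0 < N := by omega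
  have hNmem : ∀ (i : Fin (p'+1)) (j : Fin (q'+1)),
      ((MvPolynomial.X (.inl i) * MvPolynomial.X (.inr j) :
        MvPolynomial (Fin (p'+1) ⊕ Fin (q'+1)) ℂ))^N ∈ I := by
    intro i j
    have hle : Nf i j ≤ N := by
      have h' := Finset.le_sup (f := fun ij : Fin (p'+1) × Fin (q'+1) => Nf ij.1 ij.2)
        (Finset.mem_univ (i,j))
      simp only at h'
      omega
    have : N = Nf i j + (N - Nf i j) := by omega
    rw [this, pow_add]
    exact Ideal.mul_mem_right _ _ (hNf i j)
  exact keyFalse p' q' m N hN φ hhom hNmem hm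
end

section
/- Let n ≥ 1, m ≥ 0 and d ≥ 1 be integers, and let W be a nonzero finite-dimensional ℂ-linear subspace of the space of homogeneous polynomials of degree m in n variables over ℂ. Then the ℂ-linear span of the set of products {f·w : f a homogeneous polynomial of degree d in the same n variables, w ∈ W} (a subspace of the homogeneous polynomials of degree m + d) has dimension at least dim W + binom(n−1+d, n−1) − 1. -/
open MvPolynomial Pointwise

namespace SpanHomogeneousMulAux

open AddMonoidAlgebra

noncomputable section

variable {n : ℕ}

/-- The lexicographic monomial order on `Fin n →₀ ℕ`. -/
abbrev mo (n : ℕ) : MonomialOrder (Fin n) := MonomialOrder.lex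

/-- The degree map into the (well-ordered) synonym type. -/
abbrev DD (n : ℕ) : (Fin n →₀ ℕ) → (mo n).syn := (mo n).toSyn

lemma DD_injective : Function.Injective (DD n) := (mo n).toSyn.injective

lemma DD_add (a b : Fin n →₀ ℕ) : DD n (a + b) = DD n a + DD n b := map_add _ _ _

/-- The leading coefficient of a nonzero polynomial is nonzero. -/
lemma coeff_symm_supDegree_ne_zero {p : MvPolynomial (Fin n) ℂ} (hp : p ≠ 0) :
    coeff ((mo n).toSyn.symm (supDegree (DD n) p)) p ≠ 0 := by
  obtain ⟨a, ha, he⟩ := exists_supDegree_mem_support (DD n) hp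
  rw [he]
  simpa [MvPolynomial.coeff] using
    (MvPolynomial.mem_support_iff.1 ha : coeff a p ≠ 0)

/-- Cardinality lower bound: if every element of `S` is realized as a leading
monomial of a nonzero element of `U`, then `#S ≤ finrank U`. -/
lemma supDegree_smul_ne_zero {c : ℂ} (hc : c ≠ 0) (p : MvPolynomial (Fin n) ℂ) :
    supDegree (DD n) (c • p) = supDegree (DD n) p := by
  unfold AddMonoidAlgebra.supDegree
  congr 1
  exact MvPolynomial.support_smul_eq hc p

/-- Cardinality lower bound. -/
lemma card_le_finrank (U : Submodule ℂ (MvPolynomial (Fin n) ℂ)) [Module.Finite ℂ U]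
    (S : Finset ((mo n).syn))
    (hS : ∀ b ∈ S, ∃ p, p ∈ U ∧ p ≠ 0 ∧ supDegree (DD n) p = b) :
    S.card ≤ Module.finrank ℂ U := by
  classical
  choose v hvU hv0 hvd using hS
  have hli0 : LinearIndependent ℂ (fun b : {b // b ∈ S} => v b.1 b.2) := by
    rw [linearIndependent_iff']
    intro s g hsum i hi
    by_contra hg
    have hit : i ∈ s.filter (fun j => g j ≠ 0) := Finset.mem_filter.2 ⟨hi, hg⟩
    have h0 : ∑ j ∈ s.filter (fun j => g j ≠ 0), g j • v j.1 j.2 ≠ 0 := by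
      apply AddMonoidAlgebra.sum_ne_zero_of_injOn_supDegree (D := DD n)
      · exact ⟨i, hit⟩
      · intro k hk
        exact smul_ne_zero (Finset.mem_filter.1 hk).2 (hv0 k.1 k.2)
      · intro k hk l hl hkl
        have hdk : supDegree (DD n) (g k • v k.1 k.2) = k.1 := by
          rw [supDegree_smul_ne_zero (Finset.mem_filter.1 (Finset.mem_coe.1 hk)).2]
          exact hvd k.1 k.2
        have hdl : supDegree (DD n) (g l • v l.1 l.2) = l.1 := by
          rw [supDegree_smul_ne_zero (Finset.mem_filter.1 (Finset.mem_coe.1 hl)).2]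
          exact hvd l.1 l.2
        apply Subtype.ext
        rw [← hdk, ← hdl]
        exact hkl
    apply h0
    rw [Finset.sum_filter_of_ne (fun x _ hx => by
      intro hgx; apply hx; rw [hgx, zero_smul])]
    exact hsum
  have hli : LinearIndependent ℂ (fun b : {b // b ∈ S} =>
      (⟨v b.1 b.2, hvU b.1 b.2⟩ : U)) := by
    apply LinearIndependent.of_comp U.subtype
    exact hli0
  simpa [Fintype.card_coe] using hli.fintype_card_le_finrank

/-- A finite subspace `W` admits at least `finrank W` distinct leading monomials. -/
lemma exists_degrees (W : Submodule ℂ (MvPolynomial (Fin n) ℂ)) [FiniteDimensional ℂ W] :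
    ∃ S : Finset ((mo n).syn), Module.finrank ℂ W ≤ S.card ∧
      ∀ b ∈ S, ∃ w, w ∈ W ∧ w ≠ 0 ∧ supDegree (DD n) w = b := by
  classical
  set Ds : Set ((mo n).syn) := {b | ∃ w, w ∈ W ∧ w ≠ 0 ∧ supDegree (DD n) w = b} with hDs
  by_cases hfin : Ds.Finite
  · refine ⟨hfin.toFinset, ?_, fun b hb => by simpa [hDs] using hfin.mem_toFinset.1 hb⟩
    haveI : Fintype hfin.toFinset := FinsetCoe.fintype _
    let φ : W →ₗ[ℂ] (hfin.toFinset → ℂ) :=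
      LinearMap.pi (fun b => (MvPolynomial.lcoeff ℂ ((mo n).toSyn.symm b.1)).comp W.subtype)
    have hker : LinearMap.ker φ = ⊥ := by
      rw [LinearMap.ker_eq_bot']
      intro w hw
      by_contra hw0
      have hwne : (w : MvPolynomial (Fin n) ℂ) ≠ 0 := by
        simpa [Submodule.coe_eq_zero] using hw0
      have hmem : supDegree (DD n) (w : MvPolynomial (Fin n) ℂ) ∈ hfin.toFinset := by
        rw [hfin.mem_toFinset]
        exact ⟨w, w.2, hwne, rfl⟩
      have := congrFun hw ⟨_, hmem⟩
      simp only [φ, LinearMap.pi_apply, LinearMap.comp_apply, Submodule.subtype_apply,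
        MvPolynomial.lcoeff_apply, Pi.zero_apply] at this
      exact coeff_symm_supDegree_ne_zero hwne this
    have hinj : Function.Injective φ := LinearMap.ker_eq_bot.1 hker
    have := LinearMap.finrank_le_finrank_of_injective hinj
    rwa [Module.finrank_fintype_fun_eq_card, Fintype.card_coe] at this
  · obtain ⟨t, hts, htf, htc⟩ :=
      Set.Infinite.exists_subset_ncard_eq hfin (Module.finrank ℂ W)
    refine ⟨htf.toFinset, ?_, fun b hb => hts (htf.mem_toFinset.1 hb)⟩
    rw [← htc, Set.ncard_eq_toFinset_card _ htf]

/-- Sumset bound in a linearly ordered cancellative monoid: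
`#A + #B - 1 ≤ #(A + B)`. -/
lemma card_add_card_sub_one_le {α : Type*} [AddCommMonoid α] [LinearOrder α] [IsOrderedCancelAddMonoid α]
    [DecidableEq α] (A B : Finset α) (hA : A.Nonempty) (hB : B.Nonempty) :
    A.card + B.card - 1 ≤ (A + B).card := by
  classical
  set a0 := A.max' hA
  set b0 := B.min' hB
  have hsub : B.image (a0 + ·) ∪ A.image (· + b0) ⊆ A + B := by
    intro x hx
    rcases Finset.mem_union.1 hx with hx | hx
    · obtain ⟨b, hb, rfl⟩ := Finset.mem_image.1 hx
      exact Finset.add_mem_add (A.max'_mem hA) hb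
    · obtain ⟨a, ha, rfl⟩ := Finset.mem_image.1 hx
      exact Finset.add_mem_add ha (B.min'_mem hB)
  have hinter : (B.image (a0 + ·) ∩ A.image (· + b0)).card ≤ 1 := by
    rw [Finset.card_le_one]
    intro x hx y hy
    have hval : ∀ z ∈ B.image (a0 + ·) ∩ A.image (· + b0), z = a0 + b0 := by
      intro z hz
      obtain ⟨hz1, hz2⟩ := Finset.mem_inter.1 hz
      obtain ⟨b, hb, rfl⟩ := Finset.mem_image.1 hz1
      obtain ⟨a, ha, hab⟩ := Finset.mem_image.1 hz2
      have h1 : a0 + b0 ≤ a0 + b := add_le_add_right (B.min'_le b hb) a0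
      have h2 : a + b0 ≤ a0 + b0 := add_le_add_left (A.le_max' a ha) b0
      have h3 : a0 + b ≤ a0 + b0 := by rw [← hab]; exact h2
      rw [le_antisymm h3 h1]
    rw [hval x hx, hval y hy]
  have hcardB : (B.image (a0 + ·)).card = B.card :=
    Finset.card_image_of_injective _ (add_right_injective a0)
  have hcardA : (A.image (· + b0)).card = A.card :=
    Finset.card_image_of_injective _ (add_left_injective b0)
  have := Finset.card_union_add_card_inter (B.image (a0 + ·)) (A.image (· + b0))
  have hle := Finset.card_le_card hsub
  omega

/-- The finset of exponents of total degree `d`. -/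
lemma exists_degSet (n d : ℕ) :
    ∃ A : Finset (Fin n →₀ ℕ), A.card = (n + d - 1).choose d ∧
      ∀ a ∈ A, (a.sum fun _ e => e) = d := by
  classical
  haveI : Fintype {P : Fin n →₀ ℕ // P.sum (fun _ ↦ id) = d} :=
    Fintype.ofEquiv _ (Sym.equivNatSum (Fin n) d)
  refine ⟨Finset.univ.map (Function.Embedding.subtype (fun P : Fin n →₀ ℕ => P.sum (fun _ ↦ id) = d)), ?_, ?_⟩
  · rw [Finset.card_map, Finset.card_univ]
    rw [← Fintype.card_congr (Sym.equivNatSum (Fin n) d)]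
    rw [Sym.card_sym_eq_choose, Fintype.card_fin]
  · intro a ha
    obtain ⟨⟨a', ha'⟩, _, rfl⟩ := Finset.mem_map.1 ha
    exact ha'

end

end SpanHomogeneousMulAux

open SpanHomogeneousMulAux AddMonoidAlgebra

/-- **Growth of spaces of symbols of differential equations (Hopf theorem remark).**
Let `W` be a nonzero finite-dimensional ℂ-linear subspace of the homogeneous
polynomials of degree `m` in `n` variables.  Then the span of the products
`{f * w : f homogeneous of degree d, w ∈ W}` (a subspace of the homogeneous
polynomials of degree `m + d`) has dimension at least
`dim W + (n - 1 + d).choose (n - 1) - 1`. -/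
theorem span_homogeneous_mul_finrank_ge
    (n m d : ℕ) (hn : 1 ≤ n) (hd : 1 ≤ d)
    (W : Submodule ℂ (MvPolynomial (Fin n) ℂ))
    (hW : W ≤ homogeneousSubmodule (Fin n) ℂ m)
    [FiniteDimensional ℂ W] (hW0 : W ≠ ⊥) :
    Module.finrank ℂ W + (n - 1 + d).choose (n - 1) - 1 ≤
      Module.finrank ℂ
        (Submodule.span ℂ
          {p : MvPolynomial (Fin n) ℂ |
            ∃ f ∈ homogeneousSubmodule (Fin n) ℂ d, ∃ w ∈ W, p = f * w}) := by
  classical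
  set U := Submodule.span ℂ
      {p : MvPolynomial (Fin n) ℂ |
        ∃ f ∈ homogeneousSubmodule (Fin n) ℂ d, ∃ w ∈ W, p = f * w} with hU
  -- U is finite dimensional
  have hUle : U ≤ restrictDegree (Fin n) ℂ (d + m) := by
    rw [hU, Submodule.span_le]
    rintro p ⟨f, hf, w, hw, rfl⟩
    have h1 : (f * w).IsHomogeneous (d + m) :=
      ((mem_homogeneousSubmodule _ _).1 hf).mul (hW hw)
    rw [SetLike.mem_coe, mem_restrictDegree]
    intro s hs i
    have h2 := h1 (MvPolynomial.mem_support_iff.1 hs)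
    have h3 : (Finsupp.weight 1) s = s.degree := by
      rw [Finsupp.degree_eq_weight_one]; rfl
    rw [h3] at h2
    calc s i ≤ s.degree := by
          by_cases hi : i ∈ s.support
          · exact Finset.single_le_sum (fun j _ => Nat.zero_le _) hi
          · simp [Finsupp.notMem_support_iff.1 hi]
      _ = d + m := h2
  haveI : FiniteDimensional ℂ U := Submodule.finiteDimensional_of_le hUle
  -- leading monomials of W
  obtain ⟨S, hScard, hS⟩ := exists_degrees W
  have hWrank : 1 ≤ Module.finrank ℂ W := by
    have : Module.finrank ℂ W ≠ 0 := by
      intro h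
      exact hW0 (Submodule.finrank_eq_zero.1 h)
    omega
  have hSne : S.Nonempty := Finset.card_pos.1 (by omega)
  -- degree-d exponents
  obtain ⟨A0, hA0card, hA0deg⟩ := exists_degSet n d
  have hA0ne : A0.Nonempty := by
    rw [← Finset.card_pos, hA0card]
    have h1 : d ≤ n + d - 1 := by omega
    have := Nat.choose_pos h1
    omega
  set A : Finset ((mo n).syn) := A0.image (mo n).toSyn with hA
  have hAcard : A.card = A0.card :=
    Finset.card_image_of_injective _ (mo n).toSyn.injective
  have hAne : A.Nonempty := hA0ne.image _
  -- every element of A + S is a leading monomial of an element of U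
  have hreal : ∀ b ∈ A + S, ∃ p, p ∈ U ∧ p ≠ 0 ∧ supDegree (DD n) p = b := by
    intro b hb
    obtain ⟨a, ha, c, hc, rfl⟩ := Finset.mem_add.1 hb
    obtain ⟨a0, ha0, rfl⟩ := Finset.mem_image.1 ha
    obtain ⟨w, hwW, hw0, hwd⟩ := hS c hc
    have hfhom : (monomial a0 (1 : ℂ)) ∈ homogeneousSubmodule (Fin n) ℂ d := by
      rw [mem_homogeneousSubmodule]
      apply isHomogeneous_monomial
      rw [Finsupp.degree]
      exact hA0deg a0 ha0
    have hm0 : (monomial a0 (1 : ℂ)) ≠ 0 := by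
      simp [MvPolynomial.monomial_eq_zero]
    refine ⟨monomial a0 (1 : ℂ) * w, Submodule.subset_span ⟨_, hfhom, w, hwW, rfl⟩,
      mul_ne_zero hm0 hw0, ?_⟩
    have hmono : supDegree (DD n) (monomial a0 (1 : ℂ)) = DD n a0 := by
      rw [← single_eq_monomial]
      exact supDegree_single_ne_zero a0 one_ne_zero
    have hlc : leadingCoeff (DD n) (monomial a0 (1:ℂ)) * leadingCoeff (DD n) w ≠ 0 := by
      apply mul_ne_zero
      · rw [leadingCoeff_ne_zero DD_injective]; exact hm0
      · rw [leadingCoeff_ne_zero DD_injective]; exact hw0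
    rw [supDegree_mul DD_injective (fun a b => DD_add a b) hlc hm0 hw0, hmono, hwd]
  have hkey : (A + S).card ≤ Module.finrank ℂ U := card_le_finrank U (A + S) hreal
  have hsum : A.card + S.card - 1 ≤ (A + S).card :=
    card_add_card_sub_one_le A S hAne hSne
  have hchoose : (n - 1 + d).choose (n - 1) = (n + d - 1).choose d := by
    obtain ⟨e, rfl⟩ : ∃ e, n = e + 1 := ⟨n - 1, by omega⟩
    simp only [Nat.add_sub_cancel]
    have h1 : (e + 1 + d - 1) = e + d := by omega
    rw [h1]
    simpa [Nat.add_sub_cancel] using Nat.choose_symm (Nat.le_add_left d e)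
  rw [hchoose]
  have : Module.finrank ℂ W + (n + d - 1).choose d - 1 ≤ A.card + S.card - 1 := by
    rw [hAcard, hA0card]
    omega
  omega
end
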